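/- Every 1-generated F-semilattice A generated by an element a is a free algebra on {a} in the variety it generates: for every algebra B in V(A) and every b ∈ B, the assignment a ↦ b extends to a homomorphism A → B. -/

import Mathlib

inductive SLTerm (F : Type) : Type where
  | var : SLTerm F
  | meet : SLTerm F → SLTerm F → SLTerm F
  | act : F → SLTerm F → SLTerm F

/-- Evaluation of a unary term at an element of an `F`-semilattice. -/
def SLTerm.eval {F A : Type} [SemilatticeInf A] [SMul F A] : SLTerm F → A → A
  | .var, a => a
  | .meet s t, a => s.eval a ⊓ t.eval a
  | .act g t, a => g • t.eval a

inductive SLTermN (F : Type) : Type where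
  | var : ℕ → SLTermN F
  | meet : SLTermN F → SLTermN F → SLTermN F
  | act : F → SLTermN F → SLTermN F

def SLTermN.eval {F A : Type} [SemilatticeInf A] [SMul F A] : SLTermN F → (ℕ → A) → A
  | .var n, v => v n
  | .meet s t, v => s.eval v ⊓ t.eval v
  | .act g t, v => g • t.eval v

def SatQI (F : Type) (A : Type) [SemilatticeInf A] [SMul F A]
    (prem : List (SLTermN F × SLTermN F)) (c : SLTermN F × SLTermN F) : Prop :=
  ∀ v : ℕ → A, (∀ p ∈ prem, p.1.eval v = p.2.eval v) → c.1.eval v = c.2.eval v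

/-- `B` belongs to the quasivariety generated by `A`. -/
def InQ (F : Type) (A B : Type) [SemilatticeInf A] [SMul F A]
    [SemilatticeInf B] [SMul F B] : Prop :=
  ∀ prem c, SatQI F A prem c → SatQI F B prem c

/-- `B` belongs to the variety generated by `A`. -/
def InV (F : Type) (A B : Type) [SemilatticeInf A] [SMul F A]
    [SemilatticeInf B] [SMul F B] : Prop :=
  ∀ s t : SLTermN F, (∀ v : ℕ → A, s.eval v = t.eval v) → ∀ v : ℕ → B, s.eval v = t.eval v

def IsHom (F : Type) {A B : Type} [SemilatticeInf A] [SMul F A] [SemilatticeInf B] [SMul F B]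
    (φ : A → B) : Prop :=
  (∀ x y : A, φ (x ⊓ y) = φ x ⊓ φ y) ∧ ∀ (g : F) (x : A), φ (g • x) = g • φ x

/-- The subuniverse of `A` generated by `a`. -/
def genSet (F : Type) {A : Type} [SemilatticeInf A] [SMul F A] (a : A) : Set A :=
  Set.range fun t : SLTerm F => t.eval a

/-- The quasivariety generated by `A` is a minimal quasivariety of `F`-semilattices. -/
def MinGen (F : Type) [CommGroup F] (A : Type) [SemilatticeInf A] [MulAction F A] : Prop :=
  Nontrivial A ∧
    ∀ (B : Type) [SemilatticeInf B] [MulAction F B],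
      (∀ (g : F) (x y : B), g • (x ⊓ y) = g • x ⊓ g • y) →
      InQ F A B → Nontrivial B → InQ F B A

/-!
Since `F` is commutative, every unary term operation of `A` is an endomorphism of `A`, so any
two of them commute. Hence if `s a = t a` and `x = u a`, then `s x = u (s a) = u (t a) = t x`:
every relation satisfied by the generator is an identity of `A`, hence of every `B ∈ V(A)`,
and `u a ↦ u b` is a well-defined homomorphism.
-/

namespace SLTerm

section Endomorphism

variable {F A : Type} [CommMonoid F] [SemilatticeInf A] [MulAction F A]

theorem eval_inf (hA : ∀ (g : F) (x y : A), g • (x ⊓ y) = g • x ⊓ g • y)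
    (t : SLTerm F) (x y : A) : t.eval (x ⊓ y) = t.eval x ⊓ t.eval y := by
  induction t with
  | var => rfl
  | meet s t ihs iht =>
      simp only [SLTerm.eval, ihs, iht]
      exact inf_inf_inf_comm _ _ _ _
  | act g t ih => simp only [SLTerm.eval, ih, hA]

theorem eval_smul (hA : ∀ (g : F) (x y : A), g • (x ⊓ y) = g • x ⊓ g • y)
    (t : SLTerm F) (g : F) (x : A) : t.eval (g • x) = g • t.eval x := by
  induction t with
  | var => rfl
  | meet s t ihs iht => simp only [SLTerm.eval, ihs, iht, hA]
  | act h t ih => simp only [SLTerm.eval, ih, smul_smul, mul_comm]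

theorem eval_eval_comm (hA : ∀ (g : F) (x y : A), g • (x ⊓ y) = g • x ⊓ g • y)
    (s u : SLTerm F) (x : A) : s.eval (u.eval x) = u.eval (s.eval x) := by
  induction u with
  | var => rfl
  | meet u₁ u₂ ih₁ ih₂ => simp only [SLTerm.eval, eval_inf hA, ih₁, ih₂]
  | act g u ih => simp only [SLTerm.eval, eval_smul hA, ih]

theorem eval_eq_of_eval_generator_eq
    (hA : ∀ (g : F) (x y : A), g • (x ⊓ y) = g • x ⊓ g • y) {a : A} (hgen : ∀ x : A, ∃ t : SLTerm F, t.eval a = x) {s t : SLTerm F}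
    (hst : s.eval a = t.eval a) (x : A) : s.eval x = t.eval x := by
  obtain ⟨u, rfl⟩ := hgen x
  rw [eval_eval_comm hA s u, eval_eval_comm hA t u, hst]

end Endomorphism

def toSLTermN {F : Type} : SLTerm F → SLTermN F
  | .var => .var 0
  | .meet s t => .meet s.toSLTermN t.toSLTermN
  | .act g t => .act g t.toSLTermN

theorem eval_toSLTermN {F A : Type} [SemilatticeInf A] [SMul F A] (t : SLTerm F) (v : ℕ → A) :
    t.toSLTermN.eval v = t.eval (v 0) := by
  induction t with
  | var => rfl
  | meet s t ihs iht => simp only [toSLTermN, SLTermN.eval, SLTerm.eval, ihs, iht]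
  | act g t ih => simp only [toSLTermN, SLTermN.eval, SLTerm.eval, ih]

end SLTerm

theorem InV.eval_eq {F A B : Type} [SemilatticeInf A] [SMul F A] [SemilatticeInf B] [SMul F B]
    (hV : InV F A B) {s t : SLTerm F} (hst : ∀ x : A, s.eval x = t.eval x) (y : B) :
    s.eval y = t.eval y := by
  have hid : ∀ v : ℕ → A, s.toSLTermN.eval v = t.toSLTermN.eval v := fun v => by
    simp only [SLTerm.eval_toSLTermN, hst]
  simpa only [SLTerm.eval_toSLTermN] using hV _ _ hid fun _ => y

theorem exists_isHom_of_eval_eq_imp {F A B : Type} [SemilatticeInf A] [SMul F A]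
    [SemilatticeInf B] [SMul F B] {a : A} {b : B}
    (hgen : ∀ x : A, ∃ t : SLTerm F, t.eval a = x)
    (hker : ∀ s t : SLTerm F, s.eval a = t.eval a → s.eval b = t.eval b) :
    ∃ φ : A → B, IsHom F φ ∧ φ a = b := by
  choose τ hτ using hgen
  refine ⟨fun x => (τ x).eval b, ⟨fun x y => ?_, fun g x => ?_⟩, hker (τ a) .var (hτ a)⟩
  · exact hker (τ (x ⊓ y)) (.meet (τ x) (τ y)) (by simp only [SLTerm.eval, hτ])
  · exact hker (τ (g • x)) (.act g (τ x)) (by simp only [SLTerm.eval, hτ])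

/-- A `1`-generated `F`-semilattice is free on its generator in the variety it generates. -/
theorem stmt_6 (F : Type) [CommGroup F] (A : Type) [SemilatticeInf A] [MulAction F A]
    (hA : ∀ (g : F) (x y : A), g • (x ⊓ y) = g • x ⊓ g • y)
    (a : A) (hgen : ∀ x : A, ∃ t : SLTerm F, t.eval a = x) :
    ∀ (B : Type) [SemilatticeInf B] [MulAction F B],
      (∀ (g : F) (x y : B), g • (x ⊓ y) = g • x ⊓ g • y) →
      InV F A B → ∀ b : B, ∃ φ : A → B, IsHom F φ ∧ φ a = b := by
  intro B _ _ _ hV b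
  exact exists_isHom_of_eval_eq_imp hgen fun s t hst =>
    hV.eval_eq (SLTerm.eval_eq_of_eval_generator_eq hA hgen hst) b
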